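/- Every left-resolving labelled graph gives rise to a regular labelled space: if (E, L) is left-resolving and B is any accommodating collection of subsets of E^0, then the labelled space (E, L, B) is regular. -/

import Mathlib

/-- A labelled graph: a directed graph with source, range maps and a labelling of edges. -/
structure LabelledGraph (V E A : Type*) where
  src : E → V
  rng : E → V
  lab : E → A

namespace LabelledGraph

variable {V E A : Type*}

/-- `es` is a (nonempty, composable) path of edges. -/
def IsPath (G : LabelledGraph V E A) (es : List E) : Prop :=
  es ≠ [] ∧ es.Chain' (fun e f => G.rng e = G.src f)

/-- The relative range `r(S, α)`: ranges of paths labelled `α` whose source lies in `S`. -/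
def relRange (G : LabelledGraph V E A) (S : Set V) (α : List A) : Set V :=
  { w | ∃ es : List E, G.IsPath es ∧ es.map G.lab = α ∧
        (∀ e ∈ es.head?, G.src e ∈ S) ∧ ∃ e ∈ es.getLast?, G.rng e = w }

/-- `α` is a labelled path if it is the label of some path in the graph. -/
def IsLabelledPath (G : LabelledGraph V E A) (α : List A) : Prop :=
  (G.relRange Set.univ α).Nonempty

/-- The graph is left-resolving: the labelling is injective on edges into each vertex. -/
def LeftResolving (G : LabelledGraph V E A) : Prop :=
  ∀ e f : E, G.rng e = G.rng f → G.lab e = G.lab f → e = f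

/-- `L(S E¹)`, the set of labels of edges emitted from `S`. -/
def labelsFrom (G : LabelledGraph V E A) (S : Set V) : Set A :=
  G.lab '' (G.src ⁻¹' S)

/-- A sink: a vertex emitting no edges. -/
def IsSink (G : LabelledGraph V E A) (v : V) : Prop := ∀ e : E, G.src e ≠ v

/-- `𝓑` is accommodating for `G`. -/
def Accommodating (G : LabelledGraph V E A) (𝓑 : Set (Set V)) : Prop :=
  (∀ S ∈ 𝓑, ∀ α : List A, G.IsLabelledPath α → G.relRange S α ∈ 𝓑) ∧
  (∀ α : List A, G.IsLabelledPath α → G.relRange Set.univ α ∈ 𝓑) ∧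
  (∀ S ∈ 𝓑, ∀ T ∈ 𝓑, S ∩ T ∈ 𝓑) ∧
  (∀ S ∈ 𝓑, ∀ T ∈ 𝓑, S ∪ T ∈ 𝓑)

/-- The labelled space `(E, L, 𝓑)` is weakly left-resolving. -/
def WeaklyLeftResolving (G : LabelledGraph V E A) (𝓑 : Set (Set V)) : Prop :=
  ∀ S ∈ 𝓑, ∀ T ∈ 𝓑, ∀ α : List A, G.IsLabelledPath α →
    G.relRange (S ∩ T) α = G.relRange S α ∩ G.relRange T α

/-- The labelled space `(E, L, 𝓑)` is regular. -/
def Regular (G : LabelledGraph V E A) (𝓑 : Set (Set V)) : Prop :=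
  ∀ S ∈ 𝓑, ∀ T ∈ 𝓑,
    G.labelsFrom S = G.labelsFrom T → (G.labelsFrom S).Finite →
    (∀ v ∈ S, ¬ G.IsSink v) → (∀ v ∈ T, ¬ G.IsSink v) →
    (∀ a ∈ G.labelsFrom S, G.relRange S [a] = G.relRange T [a]) →
    S = T

end LabelledGraph

/-! In a left-resolving graph an edge is determined by its range and its label, so the
source of an edge `e` lies in `T` as soon as `r(e) ∈ r(T, L(e))`. So a set `S` without sinks
is contained in any `T` with `r(S, a) ⊆ r(T, a)` for all `a ∈ L(S E¹)`. -/

namespace LabelledGraph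

variable {V E A : Type*} (G : LabelledGraph V E A)

lemma mem_relRange_singleton {S : Set V} {a : A} {w : V} :
    w ∈ G.relRange S [a] ↔ ∃ e : E, G.lab e = a ∧ G.src e ∈ S ∧ G.rng e = w := by
  constructor
  · rintro ⟨es, -, hmap, hhead, f, hf, rfl⟩
    obtain ⟨e, rfl, rfl⟩ := List.map_eq_singleton_iff.1 hmap
    simp only [List.head?_cons, List.getLast?_singleton, Option.mem_def, Option.some.injEq,
      forall_eq'] at hhead hf
    exact ⟨e, rfl, hhead, hf ▸ rfl⟩
  · rintro ⟨e, rfl, hsrc, rfl⟩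
    exact ⟨[e], ⟨List.cons_ne_nil _ _, List.isChain_singleton _⟩, rfl, by simpa using hsrc,
      e, rfl, rfl⟩

lemma exists_src_eq_of_not_isSink {v : V} (hv : ¬ G.IsSink v) : ∃ e : E, G.src e = v := by
  simpa [IsSink] using hv

variable {G}

lemma LeftResolving.src_mem_of_rng_mem_relRange (hG : G.LeftResolving) {T : Set V} {e : E}
    (he : G.rng e ∈ G.relRange T [G.lab e]) : G.src e ∈ T := by
  obtain ⟨f, hlab, hsrc, hrng⟩ := G.mem_relRange_singleton.1 he
  rwa [hG e f hrng.symm hlab.symm]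

lemma LeftResolving.subset_of_relRange_subset (hG : G.LeftResolving) {S T : Set V}
    (hS : ∀ v ∈ S, ¬ G.IsSink v)
    (hST : ∀ a ∈ G.labelsFrom S, G.relRange S [a] ⊆ G.relRange T [a]) : S ⊆ T := by
  intro v hv
  obtain ⟨e, rfl⟩ := G.exists_src_eq_of_not_isSink (hS v hv)
  have hlab : G.lab e ∈ G.labelsFrom S := ⟨e, hv, rfl⟩
  exact hG.src_mem_of_rng_mem_relRange <|
    hST _ hlab (G.mem_relRange_singleton.2 ⟨e, rfl, hv, rfl⟩)

end LabelledGraph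

theorem stmt3_general {V E A : Type*} (G : LabelledGraph V E A) (hG : G.LeftResolving)
    (𝓑 : Set (Set V)) :
    G.Regular 𝓑 := by
  intro S _ T _ hlabels _ hS hT hrel
  refine (hG.subset_of_relRange_subset hS fun a ha => (hrel a ha).le).antisymm
    (hG.subset_of_relRange_subset hT fun a ha => ?_)
  exact (hrel a (hlabels ▸ ha)).ge

theorem stmt3 {V E A : Type*} (G : LabelledGraph V E A) (hG : G.LeftResolving)
    (𝓑 : Set (Set V)) (hacc : G.Accommodating 𝓑) :
    G.Regular 𝓑 :=
  stmt3_general G hG 𝓑
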